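/- arXiv:1612.06517 — 2 statements merged into one kernel-verified Lean document; each statement's English description precedes it below -/
import Mathlib

section
/- The normalization constant of the Laguerre Muttalib–Borodin ensemble: ∫_{(0,∞)^N} ∏_{1≤i<j≤N}(x_j-x_i)(x_j^θ - x_i^θ) ∏_{k=1}^N x_k^a e^{-x_k} dx = θ^{N(N-1)/2} ∏_{l=1}^N Γ(θ(l-1)+a+1)Γ(l+1), for θ > 0 and a > -1. -/
/-!
The integrand is a product of two Vandermonde determinants,
`det [x_k ^ i · x_k ^ a e^{-x_k}] · det [(x_k ^ θ) ^ j]`, so by Andréief's identity the integral is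
`N!` times the determinant of the moment matrix `Γ(i + c_j)`, `c_j = θ j + a + 1`.
Since `Γ(c + i) = (c)_i Γ(c)` and the rising factorial `(c)_i` is monic of degree `i` in `c`, that
determinant is `∏ Γ(c_j)` times the Vandermonde determinant of the arithmetic progression `c_j`,
which equals `θ ^ (N(N-1)/2) ∏_{l<N} l!`.
-/

open MeasureTheory Matrix Equiv Finset
open scoped Nat

namespace Matrix

variable {ι R : Type*} [Fintype ι] [DecidableEq ι] [CommRing R]

theorem det_mul_det_eq_sum_sum_perm (A B : Matrix ι ι R) :
    A.det * B.det = ∑ σ : Perm ι, ∑ τ : Perm ι,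
      ((Perm.sign σ : ℤ) : R) * (Perm.sign τ : ℤ) * ∏ k, A (σ k) k * B (τ k) k := by
  simp only [det_apply', sum_mul_sum, prod_mul_distrib]
  exact sum_congr rfl fun σ _ => sum_congr rfl fun τ _ => by ring

theorem sum_perm_sign_mul_prod_eq_det (M : Matrix ι ι R) (σ : Perm ι) :
    ∑ τ : Perm ι, ((Perm.sign σ : ℤ) : R) * (Perm.sign τ : ℤ) * ∏ k, M (σ k) (τ k) = M.det := by
  have hrow : ∑ τ : Perm ι, ((Perm.sign τ : ℤ) : R) * ∏ k, M (σ k) (τ k) =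
      (Perm.sign σ : ℤ) * M.det := by
    rw [← det_permute, ← det_transpose, det_apply']
    rfl
  have hsq : ((Perm.sign σ : ℤ) : R) * (Perm.sign σ : ℤ) = 1 := by
    rw [← Int.cast_mul, ← Units.val_mul, Int.units_mul_self, Units.val_one, Int.cast_one]
  simp_rw [mul_assoc]
  rw [← mul_sum, hrow, ← mul_assoc, hsq, one_mul]

theorem det_of_pow_mul {n : ℕ} (v w : Fin n → R) :
    (of fun i k : Fin n => v k ^ (i : ℕ) * w k).det = (∏ k, w k) * (vandermonde v).det := by
  rw [← det_transpose (vandermonde v), ← det_mul_row]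
  congr 1
  ext i k
  exact mul_comm _ _

theorem prod_sub_mul_sub_mul_prod_eq_det_mul_det {n : ℕ} (x y w : Fin n → R) :
    (∏ i, ∏ j ∈ Ioi i, (x j - x i) * (y j - y i)) * ∏ k, w k =
      (of fun i k : Fin n => x k ^ (i : ℕ) * w k).det *
        (of fun j k : Fin n => y k ^ (j : ℕ)).det := by
  have hy : (of fun j k : Fin n => y k ^ (j : ℕ)) = (vandermonde y)ᵀ := rfl
  rw [det_of_pow_mul, hy, det_transpose, det_vandermonde, det_vandermonde]
  simp only [prod_mul_distrib]
  ring

theorem det_vandermonde_natCast (n : ℕ) :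
    (vandermonde fun i : Fin n => (i : R)).det = ∏ l ∈ range n, (l ! : R) := by
  cases n with
  | zero => simp
  | succ m =>
    rw [det_vandermonde_id_eq_superFactorial, ← Nat.prod_range_succ_factorial, Nat.cast_prod]

theorem det_vandermonde_mul_natCast_add {n : ℕ} (θ b : R) :
    (vandermonde fun i : Fin n => θ * i + b).det =
      θ ^ (n * (n - 1) / 2) * ∏ l ∈ range n, (l ! : R) := by
  have hscale : (vandermonde fun i : Fin n => θ * i) =
      of fun i j : Fin n => θ ^ (j : ℕ) * (vandermonde fun i : Fin n => (i : R)) i j := by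
    ext i j
    simp [vandermonde_apply, mul_pow]
  rw [det_vandermonde_add, hscale, det_mul_row, det_vandermonde_natCast, prod_pow_eq_pow_sum,
    Fin.sum_univ_eq_sum_range (fun i => i), sum_range_id]

end Matrix

theorem integral_det_mul_det {ι α 𝕜 : Type*} [Fintype ι] [DecidableEq ι] [RCLike 𝕜]
    [MeasurableSpace α] (μ : Measure α) [SigmaFinite μ] (f g : ι → α → 𝕜)
    (hfg : ∀ i j, Integrable (fun x => f i x * g j x) μ) :
    ∫ x : ι → α, (of fun i k => f i (x k)).det * (of fun j k => g j (x k)).det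
        ∂(Measure.pi fun _ => μ) =
      ((Fintype.card ι)! : 𝕜) * (of fun i j => ∫ x, f i x * g j x ∂μ).det := by
  set M : Matrix ι ι 𝕜 := of fun i j => ∫ x, f i x * g j x ∂μ
  have hterm (σ τ : Perm ι) : Integrable (fun x : ι → α => ((Perm.sign σ : ℤ) : 𝕜) *
      (Perm.sign τ : ℤ) * ∏ k, f (σ k) (x k) * g (τ k) (x k)) (Measure.pi fun _ => μ) :=
    (Integrable.fintype_prod fun k => hfg _ _).const_mul _
  calc _ = ∫ x : ι → α, ∑ σ : Perm ι, ∑ τ : Perm ι, ((Perm.sign σ : ℤ) : 𝕜) *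
          (Perm.sign τ : ℤ) * ∏ k, f (σ k) (x k) * g (τ k) (x k) ∂(Measure.pi fun _ => μ) := by
        simp only [det_mul_det_eq_sum_sum_perm, of_apply]
    _ = ∑ σ : Perm ι, ∑ τ : Perm ι, ((Perm.sign σ : ℤ) : 𝕜) * (Perm.sign τ : ℤ) *
          ∏ k, M (σ k) (τ k) := by
        rw [integral_finsetSum _ fun σ _ => integrable_finsetSum _ fun τ _ => hterm σ τ]
        refine sum_congr rfl fun σ _ => ?_
        rw [integral_finsetSum _ fun τ _ => hterm σ τ]
        refine sum_congr rfl fun τ _ => ?_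
        rw [integral_const_mul, integral_fintype_prod_eq_prod (fun k x => f (σ k) x * g (τ k) x)]
        rfl
    _ = ∑ _σ : Perm ι, M.det := sum_congr rfl fun σ _ => sum_perm_sign_mul_prod_eq_det M σ
    _ = _ := by rw [sum_const, card_univ, Fintype.card_perm, nsmul_eq_mul]

namespace Real

theorem Gamma_add_nat_eq_ascPochhammer_mul {c : ℝ} (hc : 0 < c) (i : ℕ) :
    Gamma (c + i) = (ascPochhammer ℝ i).eval c * Gamma c := by
  induction i with
  | zero => simp
  | succ i ih =>
    rw [Nat.cast_succ, ← add_assoc, Gamma_add_one (by positivity), ih, ascPochhammer_succ_eval]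
    ring

theorem det_Gamma_natCast_add {n : ℕ} (c : Fin n → ℝ) (hc : ∀ j, 0 < c j) :
    (of fun i j : Fin n => Gamma (i + c j)).det = (∏ j, Gamma (c j)) * (vandermonde c).det := by
  have hpoch : (of fun i j : Fin n => Gamma (i + c j)) =
      of fun i j : Fin n => Gamma (c j) * (ascPochhammer ℝ (i : ℕ)).eval (c j) := by
    ext i j
    rw [of_apply, of_apply, add_comm, Gamma_add_nat_eq_ascPochhammer_mul (hc j), mul_comm]
  rw [hpoch, det_mul_row (fun j => Gamma (c j))
    (fun i j : Fin n => (ascPochhammer ℝ (i : ℕ)).eval (c j)),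
    det_eval_matrixOfPolynomials_eq_det_vandermonde c (fun i => ascPochhammer ℝ (i : ℕ))
      (fun i => ascPochhammer_natDegree ℝ (i : ℕ)) (fun i => monic_ascPochhammer ℝ (i : ℕ)),
    ← det_transpose]
  rfl

theorem prod_range_Gamma_natCast_add_two (n : ℕ) :
    ∏ l ∈ range n, Gamma (l + 2) = (n ! : ℝ) * ∏ l ∈ range n, (l ! : ℝ) := by
  have h (l : ℕ) : Gamma (l + 2) = ((l + 1) * l ! : ℕ) := by
    rw [← Nat.factorial_succ, ← Gamma_nat_eq_factorial]
    push_cast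
    ring_nf
  simp only [h, Nat.cast_mul, prod_mul_distrib, ← Nat.cast_prod, prod_range_add_one_eq_factorial]

theorem laguerre_moment_integrand_eqOn (θ a : ℝ) (i j : ℕ) :
    Set.EqOn (fun x : ℝ => x ^ i * (x ^ a * exp (-x)) * (x ^ θ) ^ j)
      (fun x => exp (-x) * x ^ ((i + (θ * j + a + 1)) - 1)) (Set.Ioi 0) := by
  intro x (hx : 0 < x)
  dsimp only
  rw [← rpow_natCast, ← rpow_natCast, ← rpow_mul hx.le,
    show (i : ℝ) + (θ * j + a + 1) - 1 = i + a + θ * j by ring, rpow_add hx, rpow_add hx]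
  ring

theorem laguerre_moment_arg_pos {θ a : ℝ} (hθ : 0 ≤ θ) (ha : -1 < a) (i j : ℕ) :
    0 < (i : ℝ) + (θ * j + a + 1) := by
  have : 0 ≤ θ * j := by positivity
  linarith [(i.cast_nonneg : (0 : ℝ) ≤ i)]

theorem integrableOn_laguerre_moment {θ a : ℝ} (hθ : 0 ≤ θ) (ha : -1 < a) (i j : ℕ) :
    IntegrableOn (fun x : ℝ => x ^ i * (x ^ a * exp (-x)) * (x ^ θ) ^ j) (Set.Ioi 0) :=
  (GammaIntegral_convergent (laguerre_moment_arg_pos hθ ha i j)).congr_fun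
    (laguerre_moment_integrand_eqOn θ a i j).symm measurableSet_Ioi

theorem integral_laguerre_moment {θ a : ℝ} (hθ : 0 ≤ θ) (ha : -1 < a) (i j : ℕ) :
    ∫ x in Set.Ioi 0, x ^ i * (x ^ a * exp (-x)) * (x ^ θ) ^ j = Gamma (i + (θ * j + a + 1)) := by
  rw [Gamma_eq_integral (laguerre_moment_arg_pos hθ ha i j)]
  exact setIntegral_congr_fun measurableSet_Ioi (laguerre_moment_integrand_eqOn θ a i j)

end Real

theorem laguerre_MB_normalisation_general (N : ℕ) (θ a : ℝ) (hθ : 0 < θ) (ha : -1 < a) :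
    (∫ x in Set.univ.pi fun _ : Fin N => Set.Ioi (0:ℝ),
        (∏ i : Fin N, ∏ j ∈ Finset.Ioi i, (x j - x i) * (x j ^ θ - x i ^ θ)) *
          ∏ k : Fin N, x k ^ a * Real.exp (-x k)) =
      θ ^ (N * (N - 1) / 2) *
        ∏ l ∈ Finset.range N, Real.Gamma (θ * l + a + 1) * Real.Gamma (l + 2) := by
  have hintegrand (x : Fin N → ℝ) := prod_sub_mul_sub_mul_prod_eq_det_mul_det x
    (fun k => x k ^ θ) (fun k => x k ^ a * Real.exp (-x k))
  have hc (j : Fin N) : 0 < θ * j + a + 1 := by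
    simpa only [Nat.cast_zero, zero_add] using Real.laguerre_moment_arg_pos hθ.le ha 0 j
  have hvandermonde : (vandermonde fun j : Fin N => θ * j + a + 1).det =
      θ ^ (N * (N - 1) / 2) * ∏ l ∈ range N, (l ! : ℝ) := by
    simpa only [add_assoc] using det_vandermonde_mul_natCast_add θ (a + 1)
  simp only [hintegrand]
  rw [volume_pi, Measure.restrict_pi_pi, integral_det_mul_det _
    (fun (i : Fin N) x => x ^ (i : ℕ) * (x ^ a * Real.exp (-x)))
    (fun (j : Fin N) x => (x ^ θ) ^ (j : ℕ))
    (fun i j => Real.integrableOn_laguerre_moment hθ.le ha i j)]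
  simp only [Real.integral_laguerre_moment hθ.le ha]
  rw [Real.det_Gamma_natCast_add (fun j => θ * j + a + 1) hc, hvandermonde, prod_mul_distrib,
    Real.prod_range_Gamma_natCast_add_two,
    Fin.prod_univ_eq_prod_range (fun l => Real.Gamma (θ * l + a + 1)), Fintype.card_fin]
  ring

/-- Normalisation of the Laguerre Muttalib–Borodin ensemble. -/
theorem laguerre_MB_normalisation (N : ℕ) (hN : 1 ≤ N) (θ a : ℝ) (hθ : 0 < θ) (ha : -1 < a) :
    (∫ x in Set.univ.pi fun _ : Fin N => Set.Ioi (0:ℝ),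
        (∏ i : Fin N, ∏ j ∈ Finset.Ioi i, (x j - x i) * (x j ^ θ - x i ^ θ)) *
          ∏ k : Fin N, x k ^ a * Real.exp (-x k)) =
      θ ^ (N * (N - 1) / 2) *
        ∏ l ∈ Finset.range N, Real.Gamma (θ * l + a + 1) * Real.Gamma (l + 2) :=
  laguerre_MB_normalisation_general N θ a hθ ha
end

section
/- Jacobi biorthogonal polynomials of q-type: q_k(x) = Σ_{j=0}^k (-1)^{k-j} C(k,j) [Γ(1+a+b+k+θj)/Γ(1+a+b+k+θk)] [Γ(1+a+θk)/Γ(1+a+θj)] x^j satisfies ∫_0^1 x^a (1-x)^b p(x) q_k(x^θ) dx = 0 for every polynomial p of degree less than k, where a, b > -1 and θ > 0. -/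
/-!
Expanding `p` into monomials, it suffices to treat `p = X ^ n` with `n < k`. By the Beta
integral, the `j`-th term of `q_k` then contributes its coefficient times
`Γ(a + n + θ j + 1) Γ(b + 1) / Γ(a + n + θ j + b + 2)`. After cancelling Gamma factors against
the coefficient, this is `(-1) ^ (k - j) * choose k j` times a polynomial in `j` of degree
`k - 1` (a product of two Pochhammer symbols), and the `k`-th finite difference of such a
polynomial vanishes.
-/

open MeasureTheory Finset Polynomial

theorem Real.Gamma_add_nat_eq_mul_ascPochhammer_eval {x : ℝ} (hx : 0 < x) (n : ℕ) :
    Real.Gamma (x + n) = Real.Gamma x * (ascPochhammer ℝ n).eval x := by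
  induction n with
  | zero => simp
  | succ n ih =>
    rw [Nat.cast_succ, ← add_assoc, Real.Gamma_add_one (by positivity), ih,
      ascPochhammer_succ_eval]
    ring

theorem Polynomial.sum_range_alternating_choose_mul_eval_eq_zero {R : Type*} [CommRing R]
    {P : R[X]} {k : ℕ} (hP : P.natDegree < k) :
    ∑ j ∈ range (k + 1), (-1 : R) ^ (k - j) * k.choose j * P.eval (j : R) = 0 := by
  have h := congrFun (fwdDiff_iter_eq_zero_of_degree_lt hP) 0
  rw [fwdDiff_iter_eq_sum_shift] at h
  simpa [zsmul_eq_mul] using h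

-- The left side is the integrand of `Complex.betaIntegral (s + 1) (t + 1)`.
lemma betaIntegrand_eq_ofReal {s t x : ℝ} (hx : x ∈ Set.Ioo (0 : ℝ) 1) :
    (x : ℂ) ^ ((s : ℂ) + 1 - 1) * (1 - (x : ℂ)) ^ ((t : ℂ) + 1 - 1)
      = ((x ^ s * (1 - x) ^ t : ℝ) : ℂ) := by
  rw [add_sub_cancel_right, add_sub_cancel_right, Complex.ofReal_mul,
    Complex.ofReal_cpow hx.1.le, Complex.ofReal_cpow (sub_nonneg.2 hx.2.le),
    Complex.ofReal_sub, Complex.ofReal_one]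

theorem integrableOn_rpow_mul_one_sub_rpow {s t : ℝ} (hs : -1 < s) (ht : -1 < t) :
    IntegrableOn (fun x : ℝ ↦ x ^ s * (1 - x) ^ t) (Set.Ioo 0 1) := by
  have h := Complex.betaIntegral_convergent (u := (s : ℂ) + 1) (v := (t : ℂ) + 1)
    (by simp; linarith) (by simp; linarith)
  rw [intervalIntegrable_iff_integrableOn_Ioo_of_le zero_le_one] at h
  refine IntegrableOn.congr_fun (Integrable.re h) (fun x hx ↦ ?_) measurableSet_Ioo
  simp only [RCLike.re_to_complex, betaIntegrand_eq_ofReal hx, Complex.ofReal_re]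

theorem integral_rpow_mul_one_sub_rpow {s t : ℝ} (hs : -1 < s) (ht : -1 < t) :
    ∫ x in Set.Ioo (0 : ℝ) 1, x ^ s * (1 - x) ^ t
      = Real.Gamma (s + 1) * Real.Gamma (t + 1) / Real.Gamma (s + t + 2) := by
  have h := Complex.betaIntegral_eq_Gamma_mul_div ((s : ℂ) + 1) ((t : ℂ) + 1)
    (by simp; linarith) (by simp; linarith)
  rw [Complex.betaIntegral, intervalIntegral.integral_of_le zero_le_one,
    integral_Ioc_eq_integral_Ioo, setIntegral_congr_fun measurableSet_Ioo
      (fun x hx ↦ betaIntegrand_eq_ofReal hx), integral_complex_ofReal,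
    show (s : ℂ) + 1 + ((t : ℂ) + 1) = ((s + t + 2 : ℝ) : ℂ) by push_cast; ring] at h
  rw [← Complex.ofReal_one, ← Complex.ofReal_add, ← Complex.ofReal_add, Complex.Gamma_ofReal,
    Complex.Gamma_ofReal, Complex.Gamma_ofReal] at h
  exact_mod_cast h

lemma rpow_mul_one_sub_rpow_mul_sum_eqOn (s t θ : ℝ) (c : ℕ → ℝ) (m : ℕ) :
    Set.EqOn (fun x : ℝ ↦ x ^ s * (1 - x) ^ t * ∑ j ∈ range m, c j * (x ^ θ) ^ j)
      (fun x ↦ ∑ j ∈ range m, c j * (x ^ (s + θ * j) * (1 - x) ^ t)) (Set.Ioo 0 1) := by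
  intro x hx
  simp only [mul_sum]
  refine sum_congr rfl fun j _ ↦ ?_
  rw [← Real.rpow_natCast, ← Real.rpow_mul hx.1.le, Real.rpow_add hx.1]
  ring

theorem integrableOn_rpow_mul_one_sub_rpow_mul_sum {s t θ : ℝ} (hs : -1 < s) (ht : -1 < t)
    (hθ : 0 ≤ θ) (c : ℕ → ℝ) (m : ℕ) :
    IntegrableOn (fun x : ℝ ↦ x ^ s * (1 - x) ^ t * ∑ j ∈ range m, c j * (x ^ θ) ^ j)
      (Set.Ioo 0 1) := by
  refine IntegrableOn.congr_fun ?_ (rpow_mul_one_sub_rpow_mul_sum_eqOn s t θ c m).symm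
    measurableSet_Ioo
  exact integrable_finsetSum _ fun j _ ↦
    (integrableOn_rpow_mul_one_sub_rpow (lt_add_of_lt_of_nonneg hs (by positivity)) ht).const_mul _

theorem integral_rpow_mul_one_sub_rpow_mul_sum {s t θ : ℝ} (hs : -1 < s) (ht : -1 < t)
    (hθ : 0 ≤ θ) (c : ℕ → ℝ) (m : ℕ) :
    ∫ x in Set.Ioo (0 : ℝ) 1, x ^ s * (1 - x) ^ t * ∑ j ∈ range m, c j * (x ^ θ) ^ j
      = ∑ j ∈ range m, c j *
          (Real.Gamma (s + θ * j + 1) * Real.Gamma (t + 1) / Real.Gamma (s + θ * j + t + 2)) := by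
  have hsj (j : ℕ) : -1 < s + θ * j := lt_add_of_lt_of_nonneg hs (by positivity)
  rw [setIntegral_congr_fun measurableSet_Ioo (rpow_mul_one_sub_rpow_mul_sum_eqOn s t θ c m),
    integral_finsetSum _ fun j _ ↦
      (integrableOn_rpow_mul_one_sub_rpow (hsj j) ht).const_mul _]
  refine sum_congr rfl fun j _ ↦ ?_
  rw [integral_const_mul, integral_rpow_mul_one_sub_rpow (hsj j) ht]

noncomputable def jacobiQCoeff (k : ℕ) (a b θ : ℝ) (j : ℕ) : ℝ :=
  (-1 : ℝ) ^ (k - j) * (Nat.choose k j) *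
    (Real.Gamma (1 + a + b + k + θ * j) / Real.Gamma (1 + a + b + k + θ * k)) *
    (Real.Gamma (1 + a + θ * k) / Real.Gamma (1 + a + θ * j))

/-- The product of the Gamma ratios `Γ(1 + a + θ j + n) / Γ(1 + a + θ j)` and
`Γ(1 + a + b + k + θ j) / Γ(a + n + θ j + b + 2)`, as a polynomial in `j`. -/
noncomputable def jacobiMomentPoly (k n : ℕ) (a b θ : ℝ) : ℝ[X] :=
  (ascPochhammer ℝ n).comp (C θ * X + C (1 + a)) *
    (ascPochhammer ℝ (k - 1 - n)).comp (C θ * X + C (a + n + b + 2))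

lemma natDegree_jacobiMomentPoly_lt {k n : ℕ} (hn : n < k) (a b θ : ℝ) :
    (jacobiMomentPoly k n a b θ).natDegree < k := by
  have hcomp (m : ℕ) (c₁ c₀ : ℝ) :
      ((ascPochhammer ℝ m).comp (C c₁ * X + C c₀)).natDegree ≤ m :=
    natDegree_comp_le.trans <| by
      rw [ascPochhammer_natDegree]
      exact (Nat.mul_le_mul_left m natDegree_linear_le).trans_eq (mul_one m)
  calc (jacobiMomentPoly k n a b θ).natDegree ≤ n + (k - 1 - n) :=
        natDegree_mul_le.trans (add_le_add (hcomp _ _ _) (hcomp _ _ _))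
    _ < k := by omega

lemma jacobiQCoeff_mul_beta {k n : ℕ} (hn : n < k) {a b θ : ℝ} (ha : -1 < a) (hb : -1 < b)
    (hθ : 0 ≤ θ) (j : ℕ) :
    jacobiQCoeff k a b θ j * (Real.Gamma (a + n + θ * j + 1) * Real.Gamma (b + 1) /
        Real.Gamma (a + n + θ * j + b + 2))
      = Real.Gamma (1 + a + θ * k) * Real.Gamma (b + 1) / Real.Gamma (1 + a + b + k + θ * k) *
          ((-1 : ℝ) ^ (k - j) * k.choose j * (jacobiMomentPoly k n a b θ).eval (j : ℝ)) := by
  have hθj : 0 ≤ θ * j := by positivity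
  have hu : 0 < 1 + a + θ * j := by linarith
  have hw : 0 < a + n + θ * j + b + 2 := by linarith [(n.cast_nonneg : (0 : ℝ) ≤ n)]
  have hK : 0 < 1 + a + b + k + θ * k := by
    have : (1 : ℝ) ≤ k := by exact_mod_cast hn.pos
    nlinarith [hθ]
  have hnum : Real.Gamma (a + n + θ * j + 1)
      = Real.Gamma (1 + a + θ * j) * (ascPochhammer ℝ n).eval (1 + a + θ * j) := by
    rw [← Real.Gamma_add_nat_eq_mul_ascPochhammer_eval hu]; ring_nf
  have hden : Real.Gamma (1 + a + b + k + θ * j) = Real.Gamma (a + n + θ * j + b + 2) *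
      (ascPochhammer ℝ (k - 1 - n)).eval (a + n + θ * j + b + 2) := by
    rw [← Real.Gamma_add_nat_eq_mul_ascPochhammer_eval hw, Nat.cast_sub (by omega),
      Nat.cast_sub hn.pos, Nat.cast_one]
    ring_nf
  have heval : (jacobiMomentPoly k n a b θ).eval (j : ℝ)
      = (ascPochhammer ℝ n).eval (1 + a + θ * j) *
          (ascPochhammer ℝ (k - 1 - n)).eval (a + n + θ * j + b + 2) := by
    simp only [jacobiMomentPoly, eval_mul, eval_comp, eval_add, eval_C, eval_X]
    ring_nf
  rw [jacobiQCoeff, hnum, hden, heval]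
  field_simp [(Real.Gamma_pos_of_pos hu).ne', (Real.Gamma_pos_of_pos hw).ne',
    (Real.Gamma_pos_of_pos hK).ne']

theorem sum_jacobiQCoeff_mul_beta_eq_zero {k n : ℕ} (hn : n < k) {a b θ : ℝ} (ha : -1 < a)
    (hb : -1 < b) (hθ : 0 ≤ θ) :
    ∑ j ∈ range (k + 1), jacobiQCoeff k a b θ j * (Real.Gamma (a + n + θ * j + 1) *
      Real.Gamma (b + 1) / Real.Gamma (a + n + θ * j + b + 2)) = 0 := by
  rw [sum_congr rfl fun j _ ↦ jacobiQCoeff_mul_beta hn ha hb hθ j, ← mul_sum,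
    sum_range_alternating_choose_mul_eval_eq_zero (natDegree_jacobiMomentPoly_lt hn a b θ),
    mul_zero]

/-- The Jacobi biorthogonal polynomial of q-type is orthogonal (against x^a (1-x)^b on (0,1))
to all polynomials of degree less than k. -/
theorem jacobi_q_orthogonality (k : ℕ) (a b θ : ℝ) (ha : -1 < a) (hb : -1 < b) (hθ : 0 < θ)
    (p : Polynomial ℝ) (hp : p.degree < k) :
    ∫ x in Set.Ioo (0:ℝ) 1,
        x ^ a * (1 - x) ^ b * p.eval x *
          ∑ j ∈ Finset.range (k + 1),
            (-1 : ℝ) ^ (k - j) * (Nat.choose k j) *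
              (Real.Gamma (1 + a + b + k + θ * j) / Real.Gamma (1 + a + b + k + θ * k)) *
              (Real.Gamma (1 + a + θ * k) / Real.Gamma (1 + a + θ * j)) * (x ^ θ) ^ j = 0 := by
  obtain rfl | hp0 := eq_or_ne p 0
  · simp
  have hpk : p.natDegree < k := (natDegree_lt_iff_degree_lt hp0).2 hp
  set q : ℝ → ℝ := fun x ↦ ∑ j ∈ range (k + 1), jacobiQCoeff k a b θ j * (x ^ θ) ^ j
  show ∫ x in _, x ^ a * (1 - x) ^ b * p.eval x * q x = 0
  have han (n : ℕ) : -1 < a + n := lt_add_of_lt_of_nonneg ha n.cast_nonneg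
  have hexpand : Set.EqOn (fun x ↦ x ^ a * (1 - x) ^ b * p.eval x * q x)
      (fun x ↦ ∑ n ∈ range k, p.coeff n * (x ^ (a + n) * (1 - x) ^ b * q x))
      (Set.Ioo 0 1) := by
    intro x hx
    simp only [eval_eq_sum_range' hpk, mul_sum, sum_mul, Real.rpow_add hx.1, Real.rpow_natCast]
    refine sum_congr rfl fun n _ ↦ ?_
    ring
  rw [setIntegral_congr_fun measurableSet_Ioo hexpand, integral_finsetSum _ fun n _ ↦
    (integrableOn_rpow_mul_one_sub_rpow_mul_sum (han n) hb hθ.le _ _).const_mul _]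
  refine sum_eq_zero fun n hn ↦ ?_
  rw [integral_const_mul, integral_rpow_mul_one_sub_rpow_mul_sum (han n) hb hθ.le,
    sum_jacobiQCoeff_mul_beta_eq_zero (mem_range.1 hn) ha hb hθ.le, mul_zero]
end
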